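/- Let a ∈ PT_n. An element c ∈ PT_n is a two-sided annihilator of (PT_n, *_a), i.e. c *_a u = 0 and u *_a c = 0 for all u ∈ PT_n, if and only if ran(c) ⊆ Z(a) and Z(c) ⊇ ran(a); moreover, the number of such annihilators equals (z_a + 1)^(n − rank(a)). -/

import Mathlib

/-- `PT n`: partial transformations of an `n`-element set, modeled as maps
`Fin n → Option (Fin n)` (`none` = undefined). -/
abbrev PT (n : ℕ) := Fin n → Option (Fin n)

/-- Left-to-right composition of partial maps: `(x ⬝ y) i = y (x i)` when defined. -/
def PT.comp {n : ℕ} (x y : PT n) : PT n := fun i => (x i).bind y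

/-- Deformed multiplication by `a`: `x *_a y = x · a · y` (left-to-right). -/
def PT.dmul {n : ℕ} (a x y : PT n) : PT n := PT.comp (PT.comp x a) y

/-- The nowhere defined map `0`. -/
def PT.zero {n : ℕ} : PT n := fun _ => none

/-- `z_a`: the number of points where `a` is undefined. -/
def PT.zcard {n : ℕ} (a : PT n) : ℕ :=
  (Finset.univ.filter fun i : Fin n => a i = none).card

/-- `rank a = |ran a|`. -/
def PT.rank {n : ℕ} (a : PT n) : ℕ :=
  (Finset.univ.filter fun t : Fin n => ∃ i, a i = some t).card

/-- `α_k(a)`: the number of points `t` whose full preimage `a⁻¹(t)` has exactly `k` elements. -/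
def PT.typeCount {n : ℕ} (a : PT n) (k : ℕ) : ℕ :=
  (Finset.univ.filter fun t : Fin n =>
    (Finset.univ.filter fun i : Fin n => a i = some t).card = k).card

/-- A permutation regarded as a (total) partial transformation. -/
def PT.ofPerm {n : ℕ} (σ : Equiv.Perm (Fin n)) : PT n := fun i => some (σ i)

/-!
Since the identity `some` lies in `PT n`, `c *_a u = 0` for all `u` says exactly `c · a = 0`, and
`u *_a c = 0` for all `u` says exactly `a · c = 0`; a product `x · y` vanishes iff `ran x ⊆ Z(y)`.
So `c` is an annihilator iff `c` is undefined on `ran a` and takes values in `Z(a)` elsewhere.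
These are independent pointwise choices: one on each of the `rank a` points of `ran a`, and
`z_a + 1` (undefined, or a point of `Z(a)`) on each of the other `n - rank a` points.
-/

open Finset

namespace PT

variable {n : ℕ}

@[simp]
lemma comp_apply (x y : PT n) (i : Fin n) : comp x y i = (x i).bind y := rfl

lemma comp_assoc (x y z : PT n) : comp (comp x y) z = comp x (comp y z) :=
  funext fun i => Option.bind_assoc (x i) y z

@[simp]
lemma comp_some (x : PT n) : comp x some = x :=
  funext fun i => Option.bind_fun_some (x i)

@[simp]
lemma some_comp (x : PT n) : comp some x = x := rfl

@[simp]
lemma zero_comp (x : PT n) : comp zero x = zero := rfl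

@[simp]
lemma comp_zero (x : PT n) : comp x zero = zero :=
  funext fun i => Option.bind_fun_none (x i)

lemma comp_eq_zero_iff (x y : PT n) :
    comp x y = zero ↔ ∀ i t, x i = some t → y t = none := by
  simp only [funext_iff, comp_apply, zero, Option.bind_eq_none_iff]

lemma forall_dmul_left_eq_zero_iff (a c : PT n) :
    (∀ u, dmul a c u = zero) ↔ comp c a = zero := by
  refine ⟨fun h => ?_, fun h u => ?_⟩
  · simpa only [dmul, comp_some] using h some
  · rw [dmul, h, zero_comp]

lemma forall_dmul_right_eq_zero_iff (a c : PT n) :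
    (∀ u, dmul a u c = zero) ↔ comp a c = zero := by
  refine ⟨fun h => ?_, fun h u => ?_⟩
  · simpa only [dmul, some_comp] using h some
  · rw [dmul, comp_assoc, h, comp_zero]

end PT

theorem card_partialMaps_ran_subset_none_on {α β : Type*} [Fintype α] [DecidableEq α]
    [Fintype β] [DecidableEq β] (p : α → Prop) [DecidablePred p] (q : β → Prop) [DecidablePred q] :
    #{f : α → Option β | (∀ i t, f i = some t → q t) ∧ ∀ i, p i → f i = none} =
      (#{t | q t} + 1) ^ (Fintype.card α - #{i | p i}) := by
  let T : α → Finset (Option β) := fun i => if p i then {none} else insertNone {t | q t}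
  have hmem : ∀ i (o : Option β), o ∈ T i ↔ (∀ t, o = some t → q t) ∧ (p i → o = none) := by
    intro i o
    by_cases hp : p i <;> cases o <;> simp [T, hp]
  have hT : ({f | (∀ i t, f i = some t → q t) ∧ ∀ i, p i → f i = none} :
      Finset (α → Option β)) = Fintype.piFinset T := by
    ext f
    simp only [mem_filter, mem_univ, true_and, Fintype.mem_piFinset, hmem, forall_and]
  have hcard : ∀ i, #(T i) = if p i then 1 else #{t | q t} + 1 := by
    intro i
    split_ifs with hp <;> simp [T, hp]
  rw [hT, Fintype.card_piFinset, prod_congr rfl fun i _ => hcard i, prod_ite, prod_const_one,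
    one_mul, prod_const]
  congr 1
  exact eq_tsub_of_add_eq (by rw [add_comm, card_filter_add_card_filter_not, card_univ])

/-- `c` is a two-sided annihilator of `(PT n, *_a)` iff `ran c ⊆ Z(a)` and `Z(c) ⊇ ran a`;
moreover the number of two-sided annihilators equals `(z_a + 1)^(n - rank a)`. -/
theorem annihilator_iff_and_card {n : ℕ} (a : PT n) :
    (∀ c : PT n,
      ((∀ u : PT n, PT.dmul a c u = PT.zero) ∧ (∀ u : PT n, PT.dmul a u c = PT.zero)) ↔
        ((∀ i t : Fin n, c i = some t → a t = none) ∧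
         (∀ i t : Fin n, a i = some t → c t = none))) ∧
    (Finset.univ.filter fun c : PT n =>
        (∀ u : PT n, PT.dmul a c u = PT.zero) ∧ (∀ u : PT n, PT.dmul a u c = PT.zero)).card =
      (PT.zcard a + 1) ^ (n - PT.rank a) := by
  have hann : ∀ c : PT n,
      ((∀ u, PT.dmul a c u = PT.zero) ∧ (∀ u, PT.dmul a u c = PT.zero)) ↔
        ((∀ i t, c i = some t → a t = none) ∧ (∀ i t, a i = some t → c t = none)) := fun c => by
    rw [PT.forall_dmul_left_eq_zero_iff, PT.forall_dmul_right_eq_zero_iff, PT.comp_eq_zero_iff,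
      PT.comp_eq_zero_iff]
  refine ⟨hann, ?_⟩
  have hran : ∀ c : PT n, (∀ i t, a i = some t → c t = none) ↔
      ∀ t, (∃ i, a i = some t) → c t = none := fun _ =>
    ⟨fun h t ⟨i, hi⟩ => h i t hi, fun h i t hi => h t ⟨i, hi⟩⟩
  rw [filter_congr fun c _ => (hann c).trans (and_congr_right' (hran c))]
  convert card_partialMaps_ran_subset_none_on (fun t => ∃ i, a i = some t) (a · = none) using 3
  · rfl
  · exact (Fintype.card_fin n).symm
  · rfl
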